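/- Let 𝒢 = 𝒢(G,H,S) be a strongly connected, non-complete Cayley coset digraph on n vertices with vertex connectivity κ, whose generators are distinct double-coset representatives, and suppose 𝒢 has an atom of size at most (n − κ)/2. Let A₀ be the atom of 𝒢 containing the vertex H, let ⋃A₀ ⊆ G denote the union of the cosets belonging to A₀, and let S₀ = S ∩ ⋃A₀. Then: (a) ⋃A₀ is exactly the subgroup of G generated by H ∪ S₀; and (b) for every edge (g₁H, g₂H) of 𝒢 with both endpoints in A₀, there exists s ∈ S₀ with g₁⁻¹g₂ ∈ HsH. -/
import Mathlib


open Classical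

/-- A digraph (given by its edge relation `E`) is strongly connected iff for every
ordered pair of vertices there is a directed path from the first to the second. -/
def SC {V : Type*} (E : V → V → Prop) : Prop :=
  ∀ a b : V, Relation.ReflTransGen E a b

/-- The subdigraph induced on `A` is strongly connected. -/
def SCOn {V : Type*} (E : V → V → Prop) (A : Set V) : Prop :=
  ∀ a ∈ A, ∀ b ∈ A, Relation.ReflTransGen (fun x y => x ∈ A ∧ y ∈ A ∧ E x y) a b

/-- Out-neighborhood of a set of vertices. -/
def Nout {V : Type*} (E : V → V → Prop) (A : Set V) : Set V :=
  {x | x ∉ A ∧ ∃ y ∈ A, E y x}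

/-- Vertex connectivity: the least cardinality of a set `T` of vertices whose removal
leaves a non-strongly-connected digraph; `Nat.card V - 1` if no such `T` exists. -/
noncomputable def kappa {V : Type*} [Finite V] (E : V → V → Prop) : ℕ :=
  if ∃ T : Set V, ¬ SCOn E Tᶜ then
    sInf {m | ∃ T : Set V, T.ncard = m ∧ ¬ SCOn E Tᶜ}
  else Nat.card V - 1

/-- A part of a digraph. -/
def IsPart {V : Type*} (E : V → V → Prop) (A : Set V) : Prop :=
  A.Nonempty ∧ ((A ∪ Nout E A)ᶜ : Set V).Nonempty

/-- An atom: a part with `|N(A)| = κ` of minimum cardinality among such parts. -/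
def IsAtomD {V : Type*} [Finite V] (E : V → V → Prop) (A : Set V) : Prop :=
  IsPart E A ∧ (Nout E A).ncard = kappa E ∧
    ∀ B : Set V, IsPart E B → (Nout E B).ncard = kappa E → A.ncard ≤ B.ncard
/-- The double coset `K s K`. -/
def dcoset {G : Type*} [Group G] (K : Subgroup G) (s : G) : Set G :=
  {g | ∃ h₁ ∈ K, ∃ h₂ ∈ K, g = h₁ * s * h₂}

/-- Edge relation of the Cayley coset digraph `𝒢(G,H,S)` on the left cosets `G ⧸ H`:
there is an edge from `g₁H` to `g₂H` iff `g₁⁻¹g₂ ∈ HsH` for some `s ∈ S`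
(equivalently, `g₁Hs ∩ g₂H ≠ ∅`). -/
def cayleyRel {G : Type*} [Group G] (H : Subgroup G) (S : Set G) :
    G ⧸ H → G ⧸ H → Prop :=
  fun x y => ∃ s ∈ S, ∃ g₁ g₂ : G, (g₁ : G ⧸ H) = x ∧ (g₂ : G ⧸ H) = y ∧
    g₁⁻¹ * g₂ ∈ dcoset H s

/-- `d_s = |HsH/H|`, the number of left cosets of `H` contained in `HsH`. -/
noncomputable def dval {G : Type*} [Group G] (H : Subgroup G) (s : G) : ℕ :=
  ((QuotientGroup.mk '' dcoset H s : Set (G ⧸ H))).ncard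

section Aux
variable {V : Type*} [Finite V] (E : V → V → Prop)

lemma part_cut {A : Set V} (hA : IsPart E A) : ¬ SCOn E (Nout E A)ᶜ := by
  obtain ⟨⟨p, hp⟩, q, hq⟩ := hA
  intro hsc
  have hpT : p ∈ (Nout E A)ᶜ := fun h => h.1 hp
  have hqT : q ∈ (Nout E A)ᶜ := fun h => hq (Or.inr h)
  have hqA : q ∉ A := fun h => hq (Or.inl h)
  have hreach := hsc p hpT q hqT
  have key : ∀ z, Relation.ReflTransGen
      (fun x y => x ∈ (Nout E A)ᶜ ∧ y ∈ (Nout E A)ᶜ ∧ E x y) p z → z ∈ A := by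
    intro z hz
    induction hz with
    | refl => exact hp
    | tail h1 h2 ih =>
        by_contra hc
        exact h2.2.1 ⟨hc, _, ih, h2.2.2⟩
  exact hqA (key q hreach)

lemma kappa_le_of_part {A : Set V} (hA : IsPart E A) : kappa E ≤ (Nout E A).ncard := by
  have hcut := part_cut E hA
  rw [kappa, if_pos ⟨_, hcut⟩]
  exact Nat.sInf_le ⟨Nout E A, rfl, hcut⟩

lemma ncard_tripart (B X Y : Set V) (hXY : Disjoint X Y) :
    B.ncard = (B ∩ X).ncard + (B ∩ Y).ncard + (B ∩ (X ∪ Y)ᶜ).ncard := by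
  have d1 : Disjoint (B ∩ X) (B ∩ Y) :=
    hXY.mono Set.inter_subset_right Set.inter_subset_right
  have d2 : Disjoint ((B ∩ X) ∪ (B ∩ Y)) (B ∩ (X ∪ Y)ᶜ) := by
    rw [Set.disjoint_left]
    rintro v (⟨-, hv⟩ | ⟨-, hv⟩) ⟨-, hv'⟩ <;> exact hv' (by simp [hv])
  have hB : B = ((B ∩ X) ∪ (B ∩ Y)) ∪ (B ∩ (X ∪ Y)ᶜ) := by
    ext v
    by_cases hx : v ∈ X <;> by_cases hy : v ∈ Y <;> simp [hx, hy] <;> tauto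
  calc B.ncard = (((B ∩ X) ∪ (B ∩ Y)) ∪ (B ∩ (X ∪ Y)ᶜ)).ncard := by rw [← hB]
    _ = ((B ∩ X) ∪ (B ∩ Y)).ncard + (B ∩ (X ∪ Y)ᶜ).ncard :=
        Set.ncard_union_eq d2 (Set.toFinite _) (Set.toFinite _)
    _ = (B ∩ X).ncard + (B ∩ Y).ncard + (B ∩ (X ∪ Y)ᶜ).ncard := by
        rw [Set.ncard_union_eq d1 (Set.toFinite _) (Set.toFinite _)]

/-- Intersecting small atoms are equal (Hamidoune's argument). -/
lemma atoms_eq {A F : Set V} (hA : IsAtomD E A) (hF : IsAtomD E F)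
    (hcard : 2 * A.ncard ≤ Nat.card V - kappa E) (hx : (A ∩ F).Nonempty) : A = F := by
  set k := kappa E with hk
  set dA := Nout E A with hdA
  set dF := Nout E F with hdF
  set cA := (A ∪ dA)ᶜ with hcA
  set cF := (F ∪ dF)ᶜ with hcF
  have hAdA : Disjoint A dA := by
    rw [Set.disjoint_left]; exact fun v hv h => h.1 hv
  have hFdF : Disjoint F dF := by
    rw [Set.disjoint_left]; exact fun v hv h => h.1 hv
  have haf : A.ncard = F.ncard :=
    le_antisymm (hA.2.2 F hF.1 hF.2.1) (hF.2.2 A hA.1 hA.2.1)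
  have hNC : Nout E (A ∩ F) ⊆ (A ∩ dF) ∪ ((dA ∩ F) ∪ (dA ∩ dF)) := by
    rintro y ⟨hy, z, ⟨hzA, hzF⟩, hEzy⟩
    by_cases hyA : y ∈ A
    · have hyF : y ∉ F := fun h => hy ⟨hyA, h⟩
      exact Or.inl ⟨hyA, hyF, z, hzF, hEzy⟩
    · have hydA : y ∈ dA := ⟨hyA, z, hzA, hEzy⟩
      by_cases hyF : y ∈ F
      · exact Or.inr (Or.inl ⟨hydA, hyF⟩)
      · exact Or.inr (Or.inr ⟨hydA, hyF, z, hzF, hEzy⟩)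
  have hNCcard : (Nout E (A ∩ F)).ncard ≤
      (A ∩ dF).ncard + (dA ∩ F).ncard + (dA ∩ dF).ncard := by
    refine le_trans (Set.ncard_le_ncard hNC (Set.toFinite _)) ?_
    have h1 := Set.ncard_union_le (A ∩ dF) ((dA ∩ F) ∪ (dA ∩ dF))
    have h2 := Set.ncard_union_le (dA ∩ F) (dA ∩ dF)
    omega
  have hcAne : cA.Nonempty := hA.1.2
  have hcFne : cF.Nonempty := hF.1.2
  have hCpart : IsPart E (A ∩ F) := by
    refine ⟨hx, ?_⟩
    obtain ⟨q, hq⟩ := hcAne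
    refine ⟨q, fun h => hq ?_⟩
    rcases h with (⟨h1, -⟩ | h2)
    · exact Or.inl h1
    · rcases hNC h2 with (⟨h, -⟩ | (⟨h, -⟩ | ⟨h, -⟩))
      · exact Or.inl h
      · exact Or.inr h
      · exact Or.inr h
  have h1 : k ≤ (Nout E (A ∩ F)).ncard := kappa_le_of_part E hCpart
  have rowdA : dA.ncard = (dA ∩ F).ncard + (dA ∩ dF).ncard + (dA ∩ cF).ncard :=
    ncard_tripart dA F dF hFdF
  have coldF : dF.ncard = (dF ∩ A).ncard + (dF ∩ dA).ncard + (dF ∩ cA).ncard :=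
    ncard_tripart dF A dA hAdA
  have rowA : A.ncard = (A ∩ F).ncard + (A ∩ dF).ncard + (A ∩ cF).ncard :=
    ncard_tripart A F dF hFdF
  have hn1 : Nat.card V = F.ncard + dF.ncard + cF.ncard := by
    have h := ncard_tripart (Set.univ : Set V) F dF hFdF
    simp only [Set.univ_inter, Set.ncard_univ] at h
    rw [← hcF] at h
    exact h
  have hn2 : Nat.card V = A.ncard + dA.ncard + cA.ncard := by
    have h := ncard_tripart (Set.univ : Set V) A dA hAdA
    simp only [Set.univ_inter, Set.ncard_univ] at h
    rw [← hcA] at h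
    exact h
  have hdAk : dA.ncard = k := hA.2.1
  have hdFk : dF.ncard = k := hF.2.1
  have hp1 : 0 < (A ∩ F).ncard := (Set.ncard_pos (Set.toFinite _)).mpr hx
  have c1 : (dF ∩ A).ncard = (A ∩ dF).ncard := by rw [Set.inter_comm]
  have c2 : (dF ∩ dA).ncard = (dA ∩ dF).ncard := by rw [Set.inter_comm]
  by_cases hcc : (cA ∩ cF).Nonempty
  · -- A ∪ F is a part
    have hNU : Nout E (A ∪ F) ⊆ (dA ∩ dF) ∪ ((dA ∩ cF) ∪ (dF ∩ cA)) := by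
      rintro y ⟨hy, z, hz, hEzy⟩
      have hyA : y ∉ A := fun h => hy (Or.inl h)
      have hyF : y ∉ F := fun h => hy (Or.inr h)
      have hyd : y ∈ dA ∪ dF := by
        rcases hz with hz | hz
        · exact Or.inl ⟨hyA, z, hz, hEzy⟩
        · exact Or.inr ⟨hyF, z, hz, hEzy⟩
      rcases hyd with hyd | hyd
      · by_cases h2 : y ∈ dF
        · exact Or.inl ⟨hyd, h2⟩
        · refine Or.inr (Or.inl ⟨hyd, ?_⟩)
          intro h; rcases h with h | h
          · exact hyF h
          · exact h2 h
      · by_cases h2 : y ∈ dA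
        · exact Or.inl ⟨h2, hyd⟩
        · refine Or.inr (Or.inr ⟨hyd, ?_⟩)
          intro h; rcases h with h | h
          · exact hyA h
          · exact h2 h
    have hUpart : IsPart E (A ∪ F) := by
      refine ⟨hA.1.1.mono Set.subset_union_left, ?_⟩
      obtain ⟨q, hqA, hqF⟩ := hcc
      refine ⟨q, fun h => ?_⟩
      rcases h with (h | h) | h
      · exact hqA (Or.inl h)
      · exact hqF (Or.inl h)
      · rcases hNU h with (⟨h', -⟩ | (⟨h', -⟩ | ⟨h', -⟩))
        · exact hqA (Or.inr h')
        · exact hqA (Or.inr h')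
        · exact hqF (Or.inr h')
    have h6 : k ≤ (dA ∩ dF).ncard + (dA ∩ cF).ncard + (dF ∩ cA).ncard := by
      refine le_trans (kappa_le_of_part E hUpart) ?_
      refine le_trans (Set.ncard_le_ncard hNU (Set.toFinite _)) ?_
      have h7 := Set.ncard_union_le (dA ∩ dF) ((dA ∩ cF) ∪ (dF ∩ cA))
      have h8 := Set.ncard_union_le (dA ∩ cF) (dF ∩ cA)
      omega
    have hNCk : (Nout E (A ∩ F)).ncard = k := by omega
    have hmin : A.ncard ≤ (A ∩ F).ncard := hA.2.2 _ hCpart hNCk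
    have hminF : F.ncard ≤ (A ∩ F).ncard := hF.2.2 _ hCpart hNCk
    have e1 : A ∩ F = A :=
      Set.eq_of_subset_of_ncard_le Set.inter_subset_left hmin (Set.toFinite _)
    have e2 : A ∩ F = F :=
      Set.eq_of_subset_of_ncard_le Set.inter_subset_right hminF (Set.toFinite _)
    rw [← e1, e2]
  · have hcc0 : (cA ∩ cF).ncard = 0 := by
      rw [Set.not_nonempty_iff_eq_empty.mp hcc]; simp
    have colcF : cF.ncard = (cF ∩ A).ncard + (cF ∩ dA).ncard + (cF ∩ cA).ncard :=
      ncard_tripart cF A dA hAdA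
    have d1 : (cF ∩ A).ncard = (A ∩ cF).ncard := by rw [Set.inter_comm]
    have d2 : (cF ∩ dA).ncard = (dA ∩ cF).ncard := by rw [Set.inter_comm]
    have d3 : (cF ∩ cA).ncard = (cA ∩ cF).ncard := by rw [Set.inter_comm]
    exfalso
    omega

lemma atom_reach {A : Set V} (hA : IsAtomD E A) {x : V} (hx : x ∈ A) {v : V} (hv : v ∈ A) :
    Relation.ReflTransGen (fun a b => a ∈ A ∧ b ∈ A ∧ E a b) x v := by
  set R := fun a b => a ∈ A ∧ b ∈ A ∧ E a b with hR
  set C := {z | Relation.ReflTransGen R x z} with hC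
  have hCsub : C ⊆ A := by
    intro z hz
    simp only [hC, Set.mem_setOf_eq] at hz
    induction hz with
    | refl => exact hx
    | tail _ h2 _ => exact h2.2.1
  have hNsub : Nout E C ⊆ Nout E A := by
    rintro y ⟨hy, z, hz, hEzy⟩
    by_cases hyA : y ∈ A
    · exact absurd (Relation.ReflTransGen.tail hz ⟨hCsub hz, hyA, hEzy⟩) hy
    · exact ⟨hyA, z, hCsub hz, hEzy⟩
  have hCpart : IsPart E C := by
    refine ⟨⟨x, Relation.ReflTransGen.refl⟩, ?_⟩
    obtain ⟨q, hq⟩ := hA.1.2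
    refine ⟨q, fun h => hq ?_⟩
    rcases h with h | h
    · exact Or.inl (hCsub h)
    · exact Or.inr (hNsub h)
  have hle : (Nout E C).ncard ≤ kappa E :=
    hA.2.1 ▸ Set.ncard_le_ncard hNsub (Set.toFinite _)
  have hge := kappa_le_of_part E hCpart
  have hCk : (Nout E C).ncard = kappa E := le_antisymm hle hge
  have hAC := hA.2.2 C hCpart hCk
  have hCA : C = A := Set.eq_of_subset_of_ncard_le hCsub hAC (Set.toFinite _)
  have hvC : v ∈ C := hCA.symm ▸ hv
  exact hvC

lemma Nout_image (e : Equiv.Perm V) (hE : ∀ x y, E x y ↔ E (e x) (e y)) (A : Set V) :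
    Nout E (e '' A) = e '' Nout E A := by
  ext x
  constructor
  · rintro ⟨hx, y, ⟨a, ha, rfl⟩, hxy⟩
    refine ⟨e.symm x, ⟨fun h => hx ⟨e.symm x, h, by simp⟩, a, ha, ?_⟩, by simp⟩
    rw [hE a (e.symm x), e.apply_symm_apply]
    exact hxy
  · rintro ⟨z, ⟨hz, y, hy, hEyz⟩, rfl⟩
    refine ⟨?_, e y, ⟨y, hy, rfl⟩, (hE y z).mp hEyz⟩
    rintro ⟨a, ha, hae⟩
    exact hz (e.injective hae ▸ ha)

lemma IsAtomD_image {A : Set V} (e : Equiv.Perm V) (hE : ∀ x y, E x y ↔ E (e x) (e y))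
    (hA : IsAtomD E A) : IsAtomD E (e '' A) := by
  have hN := Nout_image E e hE A
  have himg : ∀ B : Set V, (⇑e '' B).ncard = B.ncard :=
    fun B => Set.ncard_image_of_injective _ e.injective
  refine ⟨⟨hA.1.1.image e, ?_⟩, ?_, ?_⟩
  · have hcomp : (⇑e '' A ∪ Nout E (⇑e '' A))ᶜ = ⇑e '' ((A ∪ Nout E A)ᶜ) := by
      rw [hN, ← Set.image_union, Set.image_compl_eq e.bijective]
    rw [hcomp]
    exact hA.1.2.image e
  · rw [hN, himg]; exact hA.2.1
  · intro B hB hBk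
    rw [himg]
    exact hA.2.2 B hB hBk

end Aux

section Main

variable {G : Type*} [Group G] (H : Subgroup G) (S : Set G)

lemma cayley_smul_fwd (a : G) (x y : G ⧸ H) (h : cayleyRel H S x y) :
    cayleyRel H S (a • x) (a • y) := by
  obtain ⟨s, hs, g₁, g₂, h1, h2, hd⟩ := h
  subst h1; subst h2
  refine ⟨s, hs, a * g₁, a * g₂, rfl, rfl, ?_⟩
  have : (a * g₁)⁻¹ * (a * g₂) = g₁⁻¹ * g₂ := by group
  rw [this]; exact hd

lemma cayley_smul_iff (a : G) (x y : G ⧸ H) :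
    cayleyRel H S x y ↔ cayleyRel H S (a • x) (a • y) := by
  constructor
  · exact cayley_smul_fwd H S a x y
  · intro h
    have := cayley_smul_fwd H S a⁻¹ _ _ h
    simpa [smul_smul] using this

end Main

/-- Let `A₀` be the atom of `𝒢(G,H,S)` containing the vertex `H` (where `𝒢` is
strongly connected, non-complete, has distinct double-coset representatives as
generators, and has an atom of size at most `(n−κ)/2`). Then (a) `⋃A₀` is the
subgroup generated by `H ∪ S₀` where `S₀ = S ∩ ⋃A₀`, and (b) every edge of `𝒢`
with both endpoints in `A₀` is induced by some `s ∈ S₀`. -/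
theorem stmt_7 {G : Type*} [Group G] [Finite G] (H : Subgroup G) (S : Set G)
    (hSH : ∀ s ∈ S, s ∉ H)
    (hdc : ∀ s ∈ S, ∀ t ∈ S, s ≠ t → dcoset H s ≠ dcoset H t)
    (hconn : SC (cayleyRel H S))
    (hnc : ∃ x y : G ⧸ H, x ≠ y ∧ ¬ cayleyRel H S x y)
    (hatom : ∃ A : Set (G ⧸ H), IsAtomD (cayleyRel H S) A ∧
      2 * A.ncard ≤ Nat.card (G ⧸ H) - kappa (cayleyRel H S))
    (A₀ : Set (G ⧸ H)) (hA₀ : IsAtomD (cayleyRel H S) A₀)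
    (hmem : ((1 : G) : G ⧸ H) ∈ A₀) :
    {g : G | (g : G ⧸ H) ∈ A₀} =
      ↑(Subgroup.closure ((H : Set G) ∪ (S ∩ {g : G | (g : G ⧸ H) ∈ A₀}))) ∧
    ∀ g₁ g₂ : G, (g₁ : G ⧸ H) ∈ A₀ → (g₂ : G ⧸ H) ∈ A₀ →
      cayleyRel H S (g₁ : G ⧸ H) (g₂ : G ⧸ H) →
      ∃ s ∈ S ∩ {g : G | (g : G ⧸ H) ∈ A₀}, g₁⁻¹ * g₂ ∈ dcoset H s := by
  classical
  set Abar := {g : G | (g : G ⧸ H) ∈ A₀} with hAbar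
  have hc2 : 2 * A₀.ncard ≤ Nat.card (G ⧸ H) - kappa (cayleyRel H S) := by
    obtain ⟨A', hA', hA'c⟩ := hatom
    have : A₀.ncard = A'.ncard :=
      le_antisymm (hA₀.2.2 A' hA'.1 hA'.2.1) (hA'.2.2 A₀ hA₀.1 hA₀.2.1)
    omega
  -- translation stabilizer
  have hsmul : ∀ a ∈ Abar, ⇑(MulAction.toPerm a : Equiv.Perm (G ⧸ H)) '' A₀ = A₀ := by
    intro a ha
    have hiff : ∀ x y : G ⧸ H, cayleyRel H S x y ↔
        cayleyRel H S ((MulAction.toPerm a : Equiv.Perm (G ⧸ H)) x)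
          ((MulAction.toPerm a : Equiv.Perm (G ⧸ H)) y) := by
      intro x y
      exact cayley_smul_iff H S a x y
    have hAt : IsAtomD (cayleyRel H S) (⇑(MulAction.toPerm a : Equiv.Perm (G ⧸ H)) '' A₀) :=
      IsAtomD_image (cayleyRel H S) _ hiff hA₀
    have hsz : 2 * (⇑(MulAction.toPerm a : Equiv.Perm (G ⧸ H)) '' A₀).ncard ≤
        Nat.card (G ⧸ H) - kappa (cayleyRel H S) := by
      rw [Set.ncard_image_of_injective _ (Equiv.injective _)]
      exact hc2
    refine atoms_eq (cayleyRel H S) hAt hA₀ hsz ⟨((a : G) : G ⧸ H), ⟨?_, ha⟩⟩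
    refine ⟨((1 : G) : G ⧸ H), hmem, ?_⟩
    show a • ((1 : G) : G ⧸ H) = ((a : G) : G ⧸ H)
    simp
  have hmulmem : ∀ a ∈ Abar, ∀ b ∈ Abar, a * b ∈ Abar := by
    intro a ha b hb
    have : ((a * b : G) : G ⧸ H) ∈ ⇑(MulAction.toPerm a : Equiv.Perm (G ⧸ H)) '' A₀ := by
      refine ⟨((b : G) : G ⧸ H), hb, ?_⟩
      show a • ((b : G) : G ⧸ H) = ((a * b : G) : G ⧸ H)
      simp
    rw [hsmul a ha] at this
    exact this
  have hone : (1 : G) ∈ Abar := hmem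
  have hpow : ∀ a ∈ Abar, ∀ n : ℕ, a ^ n ∈ Abar := by
    intro a ha n
    induction n with
    | zero => simpa using hone
    | succ n ih => rw [pow_succ]; exact hmulmem _ ih _ ha
  have hinv : ∀ a ∈ Abar, a⁻¹ ∈ Abar := by
    intro a ha
    have ho : 0 < orderOf a := orderOf_pos a
    have h1 : a * a ^ (orderOf a - 1) = 1 := by
      rw [← pow_succ']
      have : orderOf a - 1 + 1 = orderOf a := by omega
      rw [this]
      exact pow_orderOf_eq_one a
    have : a⁻¹ = a ^ (orderOf a - 1) := inv_eq_of_mul_eq_one_right h1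
    rw [this]
    exact hpow a ha _
  let K : Subgroup G :=
    { carrier := Abar
      one_mem' := hone
      mul_mem' := fun h1 h2 => hmulmem _ h1 _ h2
      inv_mem' := fun h => hinv _ h }
  have hHK : (H : Set G) ⊆ Abar := by
    intro h hh
    show ((h : G) : G ⧸ H) ∈ A₀
    have : ((h : G) : G ⧸ H) = ((1 : G) : G ⧸ H) := QuotientGroup.eq.mpr (by simpa using H.inv_mem hh)
    rw [this]
    exact hmem
  -- part (b)
  have hb : ∀ g₁ g₂ : G, (g₁ : G ⧸ H) ∈ A₀ → (g₂ : G ⧸ H) ∈ A₀ →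
      cayleyRel H S (g₁ : G ⧸ H) (g₂ : G ⧸ H) →
      ∃ s ∈ S ∩ Abar, g₁⁻¹ * g₂ ∈ dcoset H s := by
    rintro g₁ g₂ h1 h2 ⟨s, hs, g₁', g₂', e1, e2, h₁, hH1, h₂, hH2, heq⟩
    have hg1' : g₁' ∈ Abar := by show _ ∈ A₀; rw [e1]; exact h1
    have hg2' : g₂' ∈ Abar := by show _ ∈ A₀; rw [e2]; exact h2
    have hsA : s ∈ Abar := by
      have hseq : s = h₁⁻¹ * (g₁'⁻¹ * g₂') * h₂⁻¹ := by rw [heq]; group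
      rw [hseq]
      exact K.mul_mem (K.mul_mem (K.inv_mem (hHK hH1))
        (K.mul_mem (K.inv_mem hg1') hg2')) (K.inv_mem (hHK hH2))
    have ha1 : g₁'⁻¹ * g₁ ∈ H := QuotientGroup.eq.mp e1
    have ha2 : g₂'⁻¹ * g₂ ∈ H := QuotientGroup.eq.mp e2
    refine ⟨s, ⟨hs, hsA⟩, (g₁'⁻¹ * g₁)⁻¹ * h₁, H.mul_mem (H.inv_mem ha1) hH1,
      h₂ * (g₂'⁻¹ * g₂), H.mul_mem hH2 ha2, ?_⟩
    have hkey : (g₁'⁻¹ * g₁)⁻¹ * h₁ * s * (h₂ * (g₂'⁻¹ * g₂)) =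
        g₁⁻¹ * g₁' * (h₁ * s * h₂) * (g₂'⁻¹ * g₂) := by group
    rw [hkey, ← heq]
    group
  refine ⟨?_, hb⟩
  -- part (a)
  apply Set.Subset.antisymm
  · intro g hg
    have hreach := atom_reach (cayleyRel H S) hA₀ hmem hg
    have main : ∀ x : G ⧸ H,
        Relation.ReflTransGen
          (fun u v => u ∈ A₀ ∧ v ∈ A₀ ∧ cayleyRel H S u v) (((1 : G) : G ⧸ H)) x →
        ∀ g' : G, ((g' : G) : G ⧸ H) = x →
          g' ∈ Subgroup.closure ((H : Set G) ∪ (S ∩ Abar)) := by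
      intro x hx
      induction hx with
      | refl =>
          intro g' hg'
          have : g'⁻¹ * 1 ∈ H := QuotientGroup.eq.mp hg'
          have hgH : g' ∈ H := by simpa using H.inv_mem this
          exact Subgroup.subset_closure (Or.inl hgH)
      | @tail b c hcb hstep ih =>
          intro g' hg'
          obtain ⟨hbA, hcA, hEbc⟩ := hstep
          have hgb : ((b.out : G) : G ⧸ H) = b := QuotientGroup.out_eq' b
          have hbc := ih b.out hgb
          have hbA' : ((b.out : G) : G ⧸ H) ∈ A₀ := by rw [hgb]; exact hbA
          have hcA' : ((g' : G) : G ⧸ H) ∈ A₀ := by rw [hg']; exact hcA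
          have hedge : cayleyRel H S ((b.out : G) : G ⧸ H) ((g' : G) : G ⧸ H) := by
            rw [hgb, hg']; exact hEbc
          obtain ⟨s, hsS0, h₁, hH1, h₂, hH2, heq⟩ := hb b.out g' hbA' hcA' hedge
          have hg'eq : g' = b.out * (h₁ * s * h₂) := by
            rw [← heq]; group
          rw [hg'eq]
          exact Subgroup.mul_mem _ hbc
            (Subgroup.mul_mem _
              (Subgroup.mul_mem _ (Subgroup.subset_closure (Or.inl hH1))
                (Subgroup.subset_closure (Or.inr hsS0)))
              (Subgroup.subset_closure (Or.inl hH2)))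
    exact main _ hreach g rfl
  · intro g hg
    have hKle : Subgroup.closure ((H : Set G) ∪ (S ∩ Abar)) ≤ K := by
      rw [Subgroup.closure_le]
      exact Set.union_subset hHK Set.inter_subset_right
    exact hKle hg
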